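/- Let n > 2 be a real number and σ² > 0, and let V have the gamma distribution with shape n/2 and scale 2σ²/n (so that E[V] = σ²). Then E[V/σ²] − 1 − E[log(V/σ²)] ≤ log(n/(n − 2)). -/

import Mathlib

/-!
Since `E[V] = (n/2) (2σ²/n) = σ²`, the first two terms cancel. The logarithm is concave, so by
Jensen's inequality `-E[log (V/σ²)] = E[log (σ²/V)] ≤ log E[σ²/V]`, and
`E[1/V] = 1 / ((n/2 - 1) (2σ²/n))` gives `E[σ²/V] = n/(n - 2)`. Both moments are instances of
`E[V ^ p] = Γ(α + p) β ^ p / Γ(α)`.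
-/

open MeasureTheory Real

/-- The gamma distribution with shape `α` and scale `β`: the measure on `ℝ` with density
`x ^ (α - 1) * exp (-x / β) / (Γ α * β ^ α)` on `(0, ∞)`. -/
noncomputable def gammaDist (α β : ℝ) : Measure ℝ :=
  volume.withDensity fun x =>
    ENNReal.ofReal (if x ∈ Set.Ioi (0 : ℝ) then
      x ^ (α - 1) * Real.exp (-x / β) / (Real.Gamma α * β ^ α) else 0)

open Set ProbabilityTheory

section LogIntegral

variable {Ω : Type*} [MeasurableSpace Ω] {μ : Measure Ω} {Y : Ω → ℝ}

lemma Real.abs_log_le_add_inv {y : ℝ} (hy : 0 < y) : |log y| ≤ y + y⁻¹ := by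
  have h₁ := log_le_sub_one_of_pos hy
  have h₂ := log_le_sub_one_of_pos (inv_pos.2 hy)
  rw [log_inv] at h₂
  rw [abs_le]
  constructor <;> linarith [inv_pos.2 hy]

lemma integrable_log_of_integrable_inv (hpos : ∀ᵐ ω ∂μ, 0 < Y ω) (hY : Integrable Y μ)
    (hY_inv : Integrable (fun ω => (Y ω)⁻¹) μ) : Integrable (fun ω => log (Y ω)) μ := by
  refine (hY.add hY_inv).mono'
    (measurable_log.comp_aemeasurable hY.aemeasurable).aestronglyMeasurable ?_
  filter_upwards [hpos] with ω hω
  exact abs_log_le_add_inv hω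

lemma integral_pos_of_ae_pos [NeZero μ] (hpos : ∀ᵐ ω ∂μ, 0 < Y ω) (hY : Integrable Y μ) :
    0 < ∫ ω, Y ω ∂μ := by
  refine (integral_pos_iff_support_of_nonneg_ae (hpos.mono fun ω h => h.le) hY).2 ?_
  refine pos_iff_ne_zero.2 fun h => ?_
  obtain ⟨ω, hω, hω_pos⟩ := ((measure_eq_zero_iff_ae_notMem.1 h).and hpos).exists
  exact hω (Function.mem_support.2 hω_pos.ne')

/- `ConcaveOn.le_map_integral` needs a closed domain, which `Ioi 0` is not, so we integrate the
tangent line of `log` at `∫ Y` instead. -/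
lemma integral_log_le_log_integral [IsProbabilityMeasure μ] (hpos : ∀ᵐ ω ∂μ, 0 < Y ω)
    (hY : Integrable Y μ) (hlog : Integrable (fun ω => log (Y ω)) μ) :
    ∫ ω, log (Y ω) ∂μ ≤ log (∫ ω, Y ω ∂μ) := by
  set m := ∫ ω, Y ω ∂μ
  have hm : 0 < m := integral_pos_of_ae_pos hpos hY
  have tangent : ∀ y, 0 < y → log y ≤ (log m - 1) + y / m := fun y hy => by
    have := log_le_sub_one_of_pos (div_pos hy hm)
    rw [log_div hy.ne' hm.ne'] at this
    linarith
  calc ∫ ω, log (Y ω) ∂μ ≤ ∫ ω, (log m - 1) + Y ω / m ∂μ :=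
        integral_mono_ae hlog ((integrable_const _).add (hY.div_const m))
          (hpos.mono fun ω hω => tangent _ hω)
    _ = log m := by
        rw [integral_add (integrable_const _) (hY.div_const m), integral_const, integral_div,
          probReal_univ, one_smul, div_self hm.ne', sub_add_cancel]

end LogIntegral

lemma integral_rpow_mul_exp_neg_div_Ioi {s b : ℝ} (hs : 0 < s) (hb : 0 < b) :
    ∫ x in Ioi 0, x ^ (s - 1) * exp (-x / b) = Gamma s * b ^ s := by
  have h := integral_rpow_mul_exp_neg_mul_Ioi hs (inv_pos.2 hb)
  simp only [one_div, inv_inv, ← div_eq_inv_mul, ← neg_div] at h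
  rw [h, mul_comm]

lemma integrableOn_rpow_mul_exp_neg_div_Ioi {s b : ℝ} (hs : 0 < s) (hb : 0 < b) :
    IntegrableOn (fun x => x ^ (s - 1) * exp (-x / b)) (Ioi 0) := by
  have h := integrableOn_rpow_mul_exp_neg_mul_rpow (s := s - 1) (by linarith) zero_lt_one
    (inv_pos.2 hb)
  simpa only [rpow_one, neg_mul, ← div_eq_inv_mul, ← neg_div] using h

noncomputable def gammaDensity (a b x : ℝ) : ℝ :=
  x ^ (a - 1) * exp (-x / b) / (Gamma a * b ^ a)

section GammaDist

variable {a b : ℝ}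

lemma gammaDensity_nonneg (ha : 0 < a) (hb : 0 < b) {x : ℝ} (hx : 0 < x) :
    0 ≤ gammaDensity a b x := by
  unfold gammaDensity
  positivity

lemma gammaDensity_mul_rpow {x : ℝ} (hx : 0 < x) (p : ℝ) :
    gammaDensity a b x * x ^ p = x ^ (a + p - 1) * exp (-x / b) / (Gamma a * b ^ a) := by
  rw [gammaDensity, show a + p - 1 = a - 1 + p by ring, rpow_add hx]
  ring

lemma gammaDist_eq_withDensity (a b : ℝ) :
    gammaDist a b =
      (volume.restrict (Ioi 0)).withDensity fun x => ENNReal.ofReal (gammaDensity a b x) := by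
  rw [← withDensity_indicator measurableSet_Ioi, gammaDist]
  congr with x
  by_cases hx : x ∈ Ioi 0 <;> simp [hx, gammaDensity]

lemma gammaDist_eq_gammaMeasure (hb : 0 < b) : gammaDist a b = gammaMeasure a b⁻¹ := by
  refine withDensity_congr_ae ?_
  filter_upwards [volume.ae_ne 0] with x hx
  rcases hx.lt_or_gt with hx | hx
  · simp [gammaPDF, gammaPDFReal, hx.not_gt, hx.not_ge]
  · simp only [gammaPDF, gammaPDFReal, mem_Ioi, if_pos hx, if_pos hx.le, inv_rpow hb.le]
    ring_nf

lemma isProbabilityMeasure_gammaDist (ha : 0 < a) (hb : 0 < b) :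
    IsProbabilityMeasure (gammaDist a b) := by
  rw [gammaDist_eq_gammaMeasure hb]
  exact isProbabilityMeasure_gammaMeasure ha (inv_pos.2 hb)

lemma ae_pos_gammaDist (a b : ℝ) : ∀ᵐ x ∂gammaDist a b, 0 < x := by
  rw [gammaDist_eq_withDensity]
  exact (withDensity_absolutelyContinuous _ _).ae_le (ae_restrict_mem measurableSet_Ioi)

lemma toReal_ofReal_gammaDensity_ae (ha : 0 < a) (hb : 0 < b) :
    ∀ᵐ x ∂volume.restrict (Ioi 0),
      (ENNReal.ofReal (gammaDensity a b x)).toReal = gammaDensity a b x := by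
  filter_upwards [ae_restrict_mem measurableSet_Ioi] with x hx
  exact ENNReal.toReal_ofReal (gammaDensity_nonneg ha hb hx)

lemma integral_gammaDist (ha : 0 < a) (hb : 0 < b) (g : ℝ → ℝ) :
    ∫ x, g x ∂gammaDist a b = ∫ x in Ioi 0, gammaDensity a b x * g x := by
  rw [gammaDist_eq_withDensity, integral_withDensity_eq_integral_toReal_smul
    (by unfold gammaDensity; fun_prop) (ae_of_all _ fun _ => ENNReal.ofReal_lt_top)]
  refine integral_congr_ae ?_
  filter_upwards [toReal_ofReal_gammaDensity_ae ha hb] with x hx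
  rw [hx, smul_eq_mul]

lemma integrable_gammaDist_iff (ha : 0 < a) (hb : 0 < b) {g : ℝ → ℝ} :
    Integrable g (gammaDist a b) ↔ IntegrableOn (fun x => gammaDensity a b x * g x) (Ioi 0) := by
  rw [gammaDist_eq_withDensity, integrable_withDensity_iff_integrable_smul'
    (by unfold gammaDensity; fun_prop) (ae_of_all _ fun _ => ENNReal.ofReal_lt_top)]
  refine integrable_congr ?_
  filter_upwards [toReal_ofReal_gammaDensity_ae ha hb] with x hx
  rw [hx, smul_eq_mul]

lemma integrable_rpow_gammaDist (ha : 0 < a) (hb : 0 < b) {p : ℝ} (hap : 0 < a + p) :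
    Integrable (fun x => x ^ p) (gammaDist a b) := by
  rw [integrable_gammaDist_iff ha hb]
  exact IntegrableOn.congr_fun ((integrableOn_rpow_mul_exp_neg_div_Ioi hap hb).div_const _)
    (fun x hx => (gammaDensity_mul_rpow hx p).symm) measurableSet_Ioi

lemma integral_rpow_gammaDist (ha : 0 < a) (hb : 0 < b) {p : ℝ} (hap : 0 < a + p) :
    ∫ x, x ^ p ∂gammaDist a b = Gamma (a + p) * b ^ p / Gamma a := by
  rw [integral_gammaDist ha hb,
    setIntegral_congr_fun measurableSet_Ioi fun x hx => gammaDensity_mul_rpow hx p,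
    integral_div, integral_rpow_mul_exp_neg_div_Ioi hap hb, rpow_add hb]
  have := (Gamma_pos_of_pos ha).ne'
  have := (rpow_pos_of_pos hb a).ne'
  field_simp

lemma integrable_id_gammaDist (ha : 0 < a) (hb : 0 < b) :
    Integrable (fun x => x) (gammaDist a b) := by
  simpa only [rpow_one] using integrable_rpow_gammaDist ha hb (p := 1) (by linarith)

lemma integrable_inv_gammaDist (ha : 1 < a) (hb : 0 < b) :
    Integrable (fun x => x⁻¹) (gammaDist a b) := by
  simpa only [rpow_neg_one] using
    integrable_rpow_gammaDist (a := a) (by linarith) hb (p := -1) (by linarith)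

lemma integral_id_gammaDist (ha : 0 < a) (hb : 0 < b) : ∫ x, x ∂gammaDist a b = a * b := by
  have h := integral_rpow_gammaDist ha hb (p := 1) (by linarith)
  simp only [rpow_one, Gamma_add_one ha.ne'] at h
  rw [h, mul_div_right_comm, mul_div_cancel_right₀ _ (Gamma_pos_of_pos ha).ne']

lemma integral_inv_gammaDist (ha : 1 < a) (hb : 0 < b) :
    ∫ x, x⁻¹ ∂gammaDist a b = ((a - 1) * b)⁻¹ := by
  have h := integral_rpow_gammaDist (a := a) (by linarith) hb (p := -1) (by linarith)
  have hΓ : Gamma a = (a - 1) * Gamma (a - 1) := by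
    rw [← Gamma_add_one (by linarith : a - 1 ≠ 0), sub_add_cancel]
  simp only [rpow_neg_one, ← sub_eq_add_neg] at h
  rw [h, hΓ]
  have := (Gamma_pos_of_pos (by linarith : 0 < a - 1)).ne'
  field_simp

end GammaDist

theorem expectation_minus_log_expectation_le (n σ2 : ℝ) (hn : 2 < n) (hσ2 : 0 < σ2) :
    (∫ v, v / σ2 ∂(gammaDist (n / 2) (2 * σ2 / n))) - 1
        - ∫ v, Real.log (v / σ2) ∂(gammaDist (n / 2) (2 * σ2 / n)) ≤
      Real.log (n / (n - 2)) := by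
  have ha : 1 < n / 2 := by linarith
  have hb : 0 < 2 * σ2 / n := by positivity
  have := isProbabilityMeasure_gammaDist (by linarith : (0 : ℝ) < n / 2) hb
  set μ := gammaDist (n / 2) (2 * σ2 / n)
  have h_mean : ∫ v, v / σ2 ∂μ = 1 := by
    rw [integral_div, integral_id_gammaDist (by linarith) hb]
    field_simp
  have h_inv_mean : ∫ v, σ2 / v ∂μ = n / (n - 2) := by
    simp_rw [div_eq_mul_inv σ2]
    rw [integral_const_mul, integral_inv_gammaDist ha hb]
    field_simp
  have h_log_neg : ∫ v, log (v / σ2) ∂μ = -∫ v, log (σ2 / v) ∂μ := by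
    rw [← integral_neg]
    simp_rw [← log_inv, inv_div]
  have hpos : ∀ᵐ v ∂μ, 0 < σ2 / v := (ae_pos_gammaDist _ _).mono fun v hv => div_pos hσ2 hv
  have hY : Integrable (fun v => σ2 / v) μ := by
    simpa only [div_eq_mul_inv σ2] using (integrable_inv_gammaDist ha hb).const_mul σ2
  have hY_inv : Integrable (fun v => (σ2 / v)⁻¹) μ := by
    simpa only [inv_div] using (integrable_id_gammaDist (by linarith) hb).div_const σ2
  have jensen :=
    integral_log_le_log_integral hpos hY (integrable_log_of_integrable_inv hpos hY hY_inv)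
  rw [h_inv_mean] at jensen
  rw [h_mean, h_log_neg]
  linarith
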